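/- arXiv:1411.7003 — 10 statements merged into one kernel-verified Lean document; each statement's English description precedes it below -/
import Mathlib

section
/- Let g_i = g_i(w_2,...,w_k) in Z/2[w_2,...,w_k] be defined by the recurrence g_0 = 1, g_1 = 0, and g_i = w_2 g_{i-2} + w_3 g_{i-3} + ... + w_k g_{i-k} for i \geq 2 (with g_j = 0 for j < 0). Then for every s \geq 0 and every i with i \geq 1 + k·2^s, one has g_i = w_2^{2^s} g_{i - 2·2^s} + w_3^{2^s} g_{i - 3·2^s} + ... + w_k^{2^s} g_{i - k·2^s}. -/
open MvPolynomial

/-- In characteristic 2, a symmetric double sum equals its diagonal. -/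
private lemma sum_sym_diag (s : Finset ℕ) (T : ℕ → ℕ → MvPolynomial ℕ (ZMod 2))
    (hsym : ∀ j l, T j l = T l j) :
    ∑ j ∈ s, ∑ l ∈ s, T j l = ∑ j ∈ s, T j j := by
  rw [← Finset.sum_product']
  rw [← Finset.sum_filter_add_sum_filter_not (s ×ˢ s) (fun p => p.1 = p.2)]
  have hoff : ∑ p ∈ (s ×ˢ s).filter (fun p => ¬ p.1 = p.2), T p.1 p.2 = 0 := by
    refine Finset.sum_involution (fun p _ => p.swap) ?_ ?_ ?_ ?_
    · intro p hp
      simp only [Prod.fst_swap, Prod.snd_swap]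
      rw [hsym p.2 p.1]
      exact CharTwo.add_self_eq_zero _
    · intro p hp _ h
      simp only [Finset.mem_filter] at hp
      apply hp.2
      have := congrArg Prod.fst h
      simpa using this.symm
    · intro p hp
      simp only [Finset.mem_filter, Finset.mem_product, Prod.fst_swap, Prod.snd_swap] at hp ⊢
      exact ⟨⟨hp.1.2, hp.1.1⟩, fun h => hp.2 h.symm⟩
    · intro p hp
      simp
  rw [hoff, add_zero]
  refine Finset.sum_nbij' (i := fun p => p.1) (j := fun a => (a, a)) ?_ ?_ ?_ ?_ ?_ <;>
    (intro p hp <;> simp_all <;>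
      first
        | exact Prod.ext hp.2.symm rfl
        | skip)

/-- In `ℤ/2[w₂, …, w_k]` (here `X j` denotes `w_j`), let `g i` be defined by `g 0 = 1`,
`g 1 = 0` and `g i = w₂ g_{i-2} + ⋯ + w_k g_{i-k}` for `i ≥ 2` (with `g_j = 0` for
`j < 0`, encoded by the `if` guard).  Then for every `s ≥ 0` and every
`i ≥ 1 + k·2^s`,
`g i = w₂^(2^s) g_{i-2·2^s} + w₃^(2^s) g_{i-3·2^s} + ⋯ + w_k^(2^s) g_{i-k·2^s}`. -/
theorem g_frobenius (k : ℕ) (hk : 2 ≤ k)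
    (g : ℕ → MvPolynomial ℕ (ZMod 2))
    (h0 : g 0 = 1) (h1 : g 1 = 0)
    (hrec : ∀ i : ℕ, 2 ≤ i →
      g i = ∑ j ∈ Finset.Icc 2 k, if j ≤ i then X j * g (i - j) else 0) :
    ∀ s i : ℕ, 1 + k * 2 ^ s ≤ i →
      g i = ∑ j ∈ Finset.Icc 2 k, X j ^ 2 ^ s * g (i - j * 2 ^ s) := by
  intro s
  induction s with
  | zero =>
    intro i hi
    simp only [pow_zero, mul_one, pow_one]
    rw [hrec i (by omega)]
    apply Finset.sum_congr rfl
    intro j hj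
    simp only [Finset.mem_Icc] at hj
    rw [if_pos (by omega)]
  | succ s IH =>
    intro i hi
    set e := 2 ^ s with he
    have h2 : 2 ^ (s + 1) = e + e := by rw [pow_succ]; ring
    have hke : 1 + (k * e + k * e) ≤ i := by rw [h2, Nat.mul_add] at hi; omega
    have hi1 : 1 + k * e ≤ i := by omega
    rw [IH i hi1]
    have step2 : ∀ j ∈ Finset.Icc 2 k,
        X (R := ZMod 2) j ^ e * g (i - j * e)
          = ∑ l ∈ Finset.Icc 2 k, X j ^ e * (X l ^ e * g (i - j * e - l * e)) := by
      intro j hj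
      simp only [Finset.mem_Icc] at hj
      have hje : j * e ≤ k * e := Nat.mul_le_mul_right e hj.2
      rw [IH (i - j * e) (by omega), Finset.mul_sum]
    rw [Finset.sum_congr rfl step2]
    have hdiag := sum_sym_diag (Finset.Icc 2 k)
      (fun j l => X j ^ e * (X l ^ e * g (i - j * e - l * e)))
      (by
        intro j l
        have hn : i - j * e - l * e = i - l * e - j * e := by omega
        rw [hn]; ring)
    rw [hdiag]
    apply Finset.sum_congr rfl
    intro j hj
    have h1' : X (R := ZMod 2) j ^ 2 ^ (s + 1) = X j ^ e * X j ^ e := by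
      rw [h2, pow_add]
    have h2' : i - j * 2 ^ (s + 1) = i - j * e - j * e := by
      rw [h2, Nat.mul_add]; omega
    rw [h1', h2', mul_assoc]
end

section
/- Let g_i(w_2, w_3) in Z/2[w_2, w_3] be defined by g_0 = 1, g_1 = 0, and g_i = w_2 g_{i-2} + w_3 g_{i-3} for i \geq 2. Then for every i \geq 2 that is not of the form 2^t - 3 for some integer t \geq 2, the polynomial g_i(w_2, w_3) is nonzero. -/
open MvPolynomial

/-!
Specialize `w₂ ↦ x² + x + 1`, `w₃ ↦ x² + x` in `𝔽₂[x]`. Then `T³ + w₂ T + w₃` splits with roots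
`x, x + 1, 1`, so `g i` becomes the complete homogeneous polynomial of degree `i` in these roots,
and Lagrange interpolation gives `x (x + 1) g i = x^(i+3) + (x + 1)^(i+3) + 1`. The right-hand side
vanishes only when `i + 3` is a power of two: for `i + 3` even it is, by Frobenius, the square of
the same expression at `(i + 3) / 2`, and for `i + 3` odd its coefficient of `x` is `i + 3 = 1`.
-/

theorem vandermonde_mul_eq_alternant_of_recurrence {R : Type*} [CommRing R] {a b c : R}
    (habc : a + b + c = 0) {q : ℕ → R} (h0 : q 0 = 1) (h1 : q 1 = 0)
    (h2 : q 2 = -(a * b + b * c + c * a))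
    (hrec : ∀ j, q (j + 3) = -(a * b + b * c + c * a) * q (j + 1) + a * b * c * q j) (j : ℕ) :
    (a - b) * (b - c) * (a - c) * q j
      = a ^ (j + 2) * (b - c) + b ^ (j + 2) * (c - a) + c ^ (j + 2) * (a - b) := by
  obtain rfl : c = -(a + b) := eq_neg_of_add_eq_zero_right habc
  induction j using Nat.strong_induction_on with
  | _ j ih =>
    match j with
    | 0 => rw [h0]; ring
    | 1 => rw [h1]; ring
    | 2 => rw [h2]; ring
    | j + 3 =>
      rw [hrec j]
      linear_combination (-(a * b + b * -(a + b) + -(a + b) * a)) * ih (j + 1) (by omega)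
        + a * b * -(a + b) * ih j (by omega)

theorem exists_eq_two_pow_of_X_pow_add_X_add_one_pow_add_one_eq_zero {R : Type*} [CommRing R]
    [IsDomain R] [CharP R 2] {m : ℕ} (hm : 0 < m)
    (h : (Polynomial.X : Polynomial R) ^ m + (Polynomial.X + 1) ^ m + 1 = 0) :
    ∃ t, m = 2 ^ t := by
  induction m using Nat.strong_induction_on with
  | _ m ih =>
    rcases Nat.even_or_odd' m with ⟨k, rfl | rfl⟩
    · have hsq : ((Polynomial.X : Polynomial R) ^ k + (Polynomial.X + 1) ^ k + 1) ^ 2 = 0 := by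
        rw [CharTwo.add_sq, CharTwo.add_sq, one_pow, ← pow_mul, ← pow_mul, mul_comm, h]
      obtain ⟨t, rfl⟩ := ih k (by omega) (by omega) (pow_eq_zero_iff two_ne_zero |>.mp hsq)
      exact ⟨t + 1, by rw [pow_succ']⟩
    · obtain rfl | hk := Nat.eq_zero_or_pos k
      · exact ⟨0, rfl⟩
      have hcoeff := congrArg (Polynomial.coeff · 1) h
      simp only [Polynomial.coeff_add, Polynomial.coeff_X_pow, Polynomial.coeff_X_add_one_pow,
        Polynomial.coeff_one, Polynomial.coeff_zero, Nat.choose_one_right] at hcoeff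
      rw [if_neg (by omega), if_neg one_ne_zero, zero_add, add_zero,
        CharP.cast_eq_zero_iff R 2] at hcoeff
      omega

/-- In `ℤ/2[w₂, w₃]` (here `X 2`, `X 3` denote `w₂`, `w₃`), let `g i` be defined by
`g 0 = 1`, `g 1 = 0` and `g i = w₂ g_{i-2} + w₃ g_{i-3}` for `i ≥ 2` (with `g_j = 0` for
`j < 0`).  Then for every `i ≥ 2` which is not of the form `2^t - 3` with `t ≥ 2`,
the polynomial `g i` is nonzero. -/
theorem g_ne_zero_of_not_pow_two_sub_three
    (g : ℕ → MvPolynomial ℕ (ZMod 2))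
    (h0 : g 0 = 1) (h1 : g 1 = 0)
    (h2 : g 2 = X 2 * g 0)
    (hrec : ∀ i : ℕ, g (i + 3) = X 2 * g (i + 1) + X 3 * g i) :
    ∀ i : ℕ, 2 ≤ i → (¬ ∃ t : ℕ, 2 ≤ t ∧ i = 2 ^ t - 3) → g i ≠ 0 := by
  intro i _ hnot hgi
  set x : Polynomial (ZMod 2) := Polynomial.X
  have two_eq_zero : (2 : Polynomial (ZMod 2)) = 0 := CharTwo.two_eq_zero
  let φ := aeval (R := ZMod 2) fun n : ℕ ↦
    if n = 2 then -(x * (x + 1) + (x + 1) * 1 + 1 * x) else x * (x + 1) * 1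
  have hroots : x + (x + 1) + 1 = 0 := by linear_combination (x + 1) * two_eq_zero
  have key := vandermonde_mul_eq_alternant_of_recurrence hroots (q := fun n ↦ φ (g n))
    (by simp [h0]) (by simp [h1]) (by simp [h2, h0, φ]) (fun j ↦ by simp [hrec j, φ]) i
  rw [hgi, map_zero, mul_zero] at key
  obtain ⟨t, ht⟩ := exists_eq_two_pow_of_X_pow_add_X_add_one_pow_add_one_eq_zero
    (m := i + 3) (by omega) <| by
      linear_combination -key + ((x + 1) ^ (i + 2) * x + 1) * two_eq_zero
  refine hnot ⟨t, ?_, by omega⟩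
  by_contra! ht1
  have : 2 ^ t ≤ 2 ^ 1 := Nat.pow_le_pow_right two_pos (by omega)
  omega
end

section
/- Let g_i(w_2, w_3) in Z/2[w_2, w_3] be defined by g_0 = 1, g_1 = 0, and g_i = w_2 g_{i-2} + w_3 g_{i-3} for i \geq 2. Then g_i(w_2,w_3) = 0 if and only if i = 2^t - 3 for some integer t \geq 2 (for i \geq 1). -/
open MvPolynomial

section Aux

/-- An equivalence `ℕ ≃ Option ℕ` sending `0` to `none`. -/
def natOptEquivAux : ℕ ≃ Option ℕ where
  toFun n := match n with | 0 => none | n+1 => some n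
  invFun o := o.elim 0 Nat.succ
  left_inv n := by cases n <;> rfl
  right_inv o := by cases o <;> rfl

/-- View `ℤ/2[w₂,w₃,…]` as polynomials in the single variable `w₂`. -/
noncomputable def phiAux :
    MvPolynomial ℕ (ZMod 2) ≃ₐ[ZMod 2] Polynomial (MvPolynomial ℕ (ZMod 2)) :=
  (renameEquiv _ (Equiv.swap 0 2)).trans
    ((renameEquiv _ natOptEquivAux).trans (optionEquivLeft _ ℕ))

lemma phiAux_X2 : phiAux (X 2) = Polynomial.X := by
  simp [phiAux, natOptEquivAux, Equiv.swap_apply_right]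

/-- `w₂` is not a square (up to squares): descent lemma. -/
lemma descentAux (a b : MvPolynomial ℕ (ZMod 2)) (h : a ^ 2 = X 2 * b ^ 2) : b = 0 := by
  by_contra hb
  have hB : phiAux b ≠ 0 := by
    simpa using fun h' => hb (phiAux.injective (by simpa using h'))
  have hEq : (phiAux a) ^ 2 = Polynomial.X * (phiAux b) ^ 2 := by
    have := congrArg phiAux h
    simpa [map_mul, map_pow, phiAux_X2] using this
  have hA : phiAux a ≠ 0 := by
    intro h'
    rw [h', zero_pow (by norm_num)] at hEq
    exact Polynomial.X_ne_zero (by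
      rcases mul_eq_zero.mp hEq.symm with h'' | h''
      · exact h''
      · exact absurd (pow_eq_zero_iff (by norm_num) |>.mp h'') hB)
  have hdeg := congrArg Polynomial.natDegree hEq
  rw [Polynomial.natDegree_pow, Polynomial.natDegree_mul Polynomial.X_ne_zero
    (pow_ne_zero _ hB), Polynomial.natDegree_pow, Polynomial.natDegree_X] at hdeg
  omega

/-- Doubling identities: `g(2j+2) = g(j+1)² + w₂ g(j)²` and `g(2j+3) = w₃ g(j)²`. -/
lemma doublingAux (g : ℕ → MvPolynomial ℕ (ZMod 2))
    (h0 : g 0 = 1) (h1 : g 1 = 0)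
    (h2 : g 2 = X 2 * g 0)
    (hrec : ∀ i : ℕ, g (i + 3) = X 2 * g (i + 1) + X 3 * g i) :
    ∀ j : ℕ, (g (2*j+2) = g (j+1)^2 + X 2 * g j^2) ∧ (g (2*j+3) = X 3 * g j^2) := by
  intro j
  induction j using Nat.strong_induction_on with
  | _ j ih =>
    match j with
    | 0 =>
      constructor
      · show g 2 = _
        rw [h2, h0, h1]; ring
      · show g 3 = _
        have := hrec 0
        rw [h0, h1] at this
        rw [this, h0]; ring
    | 1 =>
      have e3 : g 3 = X 3 * g 0 ^ 2 := (ih 0 (by norm_num)).2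
      constructor
      · show g 4 = _
        have := hrec 1
        rw [h1, h2, h0] at this
        rw [show (4:ℕ) = 1 + 3 from rfl, this, h2, h0, h1]; ring
      · show g 5 = _
        have := hrec 2
        rw [show (5:ℕ) = 2 + 3 from rfl, this, e3, h2, h0, h1]
        ring_nf
        rw [show ((2:MvPolynomial ℕ (ZMod 2))) = 0 from by
          exact_mod_cast CharP.cast_eq_zero (MvPolynomial ℕ (ZMod 2)) 2]
        ring
    | (j+2) =>
      obtain ⟨E1, O1⟩ := ih (j+1) (by omega)
      obtain ⟨E0, O0⟩ := ih j (by omega)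
      have two0 : ((2:MvPolynomial ℕ (ZMod 2))) = 0 := by
        exact_mod_cast CharP.cast_eq_zero (MvPolynomial ℕ (ZMod 2)) 2
      constructor
      · have h := hrec (2*j+3)
        have e : 2*(j+2)+2 = 2*j+3+3 := by ring
        rw [e, h, show 2*j+3+1 = 2*(j+1)+2 from by ring, E1, O0]
        have hs := hrec j
        rw [hs, CharTwo.add_sq, mul_pow, mul_pow]
        ring_nf
      · have h := hrec (2*j+4)
        have e : 2*(j+2)+3 = 2*j+4+3 := by ring
        rw [e, h, show 2*j+4+1 = 2*(j+1)+3 from by ring, O1,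
          show 2*j+4 = 2*(j+1)+2 from by ring, E1]
        ring_nf
        all_goals (rw [two0]; ring)

end Aux

/-- Lemma 2.2(i): In `ℤ/2[w₂, w₃]` (here `X 2`, `X 3` denote `w₂`, `w₃`), let `g i` be
defined by `g 0 = 1`, `g 1 = 0` and `g i = w₂ g_{i-2} + w₃ g_{i-3}` for `i ≥ 2`
(with `g_j = 0` for `j < 0`).  Then for `i ≥ 1`, `g i = 0` iff `i = 2^t - 3` for some
`t ≥ 2`. -/
theorem g_eq_zero_iff_pow_two_sub_three
    (g : ℕ → MvPolynomial ℕ (ZMod 2))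
    (h0 : g 0 = 1) (h1 : g 1 = 0)
    (h2 : g 2 = X 2 * g 0)
    (hrec : ∀ i : ℕ, g (i + 3) = X 2 * g (i + 1) + X 3 * g i) :
    ∀ i : ℕ, 1 ≤ i → (g i = 0 ↔ ∃ t : ℕ, 2 ≤ t ∧ i = 2 ^ t - 3) := by
  have hEO := doublingAux g h0 h1 h2 hrec
  intro i
  induction i using Nat.strong_induction_on with
  | _ i ih =>
    intro hi
    rcases Nat.even_or_odd i with he | ho
    · -- even case: g i ≠ 0 and i is not of the form 2^t - 3
      obtain ⟨j, hj⟩ : ∃ j, i = 2*j+2 := by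
        obtain ⟨k, hk⟩ := he; exact ⟨k - 1, by omega⟩
      subst hj
      constructor
      · intro hgz
        exfalso
        have hE := (hEO j).1
        rw [hgz] at hE
        have hsq : g (j+1)^2 = X 2 * g j^2 := by
          have := CharTwo.add_eq_iff_eq_add.mp hE.symm
          simpa using this
        have hgj : g j = 0 := descentAux _ _ hsq
        have hgj1 : g (j+1) = 0 := by
          rw [hgj] at hsq
          have : g (j+1) ^ 2 = 0 := by rw [hsq]; ring
          exact pow_eq_zero_iff (by norm_num) |>.mp this
        match j with
        | 0 => rw [h0] at hgj; exact one_ne_zero hgj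
        | (j+1) =>
          obtain ⟨s, hs2, hse⟩ := (ih (j+1) (by omega) (by omega)).mp hgj
          obtain ⟨t, ht2, hte⟩ := (ih (j+2) (by omega) (by omega)).mp hgj1
          have h4s : 4 ≤ 2^s := by calc (4:ℕ) = 2^2 := rfl
                                       _ ≤ 2^s := Nat.pow_le_pow_right (by norm_num) hs2
          have h4t : 4 ≤ 2^t := by calc (4:ℕ) = 2^2 := rfl
                                       _ ≤ 2^t := Nat.pow_le_pow_right (by norm_num) ht2
          have hds : 4 ∣ 2^s := by
            calc (4:ℕ) = 2^2 := rfl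
            _ ∣ 2^s := pow_dvd_pow 2 hs2
          have hdt : 4 ∣ 2^t := by
            calc (4:ℕ) = 2^2 := rfl
            _ ∣ 2^t := pow_dvd_pow 2 ht2
          omega
      · rintro ⟨t, ht2, hte⟩
        exfalso
        have h4t : 4 ≤ 2^t := by calc (4:ℕ) = 2^2 := rfl
                                     _ ≤ 2^t := Nat.pow_le_pow_right (by norm_num) ht2
        have hdt : 2 ∣ 2^t := dvd_pow_self 2 (by omega)
        omega
    · -- odd case
      obtain ⟨k, hk⟩ := ho
      subst hk
      match k with
      | 0 =>
        constructor
        · intro _; exact ⟨2, le_refl 2, by norm_num⟩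
        · intro _; exact h1
      | (j+1) =>
        rw [show 2*(j+1)+1 = 2*j+3 from by ring]
        have hO := (hEO j).2
        have hX3 : (X 3 : MvPolynomial ℕ (ZMod 2)) ≠ 0 := X_ne_zero 3
        have key : g (2*j+3) = 0 ↔ g j = 0 := by
          rw [hO]
          constructor
          · intro h'
            rcases mul_eq_zero.mp h' with h'' | h''
            · exact absurd h'' hX3
            · exact pow_eq_zero_iff (by norm_num) |>.mp h''
          · intro h'; rw [h']; ring
        rw [key]
        match j with
        | 0 =>
          constructor
          · intro h'; rw [h0] at h'; exact absurd h' one_ne_zero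
          · rintro ⟨t, ht2, hte⟩
            exfalso
            have h4t : 4 ∣ 2^t := by
              calc (4:ℕ) = 2^2 := rfl
              _ ∣ 2^t := pow_dvd_pow 2 ht2
            have h4t' : 4 ≤ 2^t := Nat.le_of_dvd (by positivity) h4t
            omega
        | (j+1) =>
          rw [ih (j+1) (by omega) (by omega)]
          constructor
          · rintro ⟨s, hs2, hse⟩
            refine ⟨s+1, by omega, ?_⟩
            have h4s : 4 ≤ 2^s := by calc (4:ℕ) = 2^2 := rfl
                                         _ ≤ 2^s := Nat.pow_le_pow_right (by norm_num) hs2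
            have : 2^(s+1) = 2 * 2^s := by rw [pow_succ]; ring
            omega
          · rintro ⟨t, ht2, hte⟩
            have h4t : 4 ≤ 2^t := by calc (4:ℕ) = 2^2 := rfl
                                         _ ≤ 2^t := Nat.pow_le_pow_right (by norm_num) ht2
            have ht3 : 3 ≤ t := by
              by_contra h'
              interval_cases t <;> omega
            refine ⟨t-1, by omega, ?_⟩
            have h2t : 2^t = 2 * 2^(t-1) := by
              conv_lhs => rw [show t = (t-1)+1 from by omega]
              rw [pow_succ]; ring
            have h4s : 2 ≤ 2^(t-1) := by
              calc (2:ℕ) = 2^1 := rfl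
              _ ≤ 2^(t-1) := Nat.pow_le_pow_right (by norm_num) (by omega)
            omega
end

section
/- Let g_i(w_2, w_3, w_4) in Z/2[w_2, w_3, w_4] be defined by g_0 = 1, g_1 = 0, and g_i = w_2 g_{i-2} + w_3 g_{i-3} + w_4 g_{i-4} for i \geq 2 (with g_j = 0 for j < 0). Then for every t \geq 2, g_{2^t - 3}(w_2, w_3, w_4) = 0. -/
open MvPolynomial

lemma htwo' : (2 : MvPolynomial ℕ (ZMod 2)) = 0 := by
  have : ((2:ℕ) : MvPolynomial ℕ (ZMod 2)) = 0 := CharP.cast_eq_zero _ 2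
  simpa using this

lemma frob (g : ℕ → MvPolynomial ℕ (ZMod 2))
    (hrec : ∀ i : ℕ, g (i + 4) = X 2 * g (i + 2) + X 3 * g (i + 1) + X 4 * g i) :
    ∀ s, ∀ i, g (i + 4*2^s) = X 2 ^ 2^s * g (i + 2*2^s) + X 3 ^ 2^s * g (i + 2^s) + X 4 ^ 2^s * g i := by
  intro s
  induction s with
  | zero => intro i; simpa using hrec i
  | succ s ih =>
    have key : ∀ i, g (i + 4*(2*2^s)) = X 2 ^ (2*2^s) * g (i + 2*(2*2^s)) + X 3 ^ (2*2^s) * g (i + (2*2^s)) + X 4 ^ (2*2^s) * g i := by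
      intro i
      have h4 := ih (i + 4*2^s)
      have h6 := ih (i + 2*2^s)
      have h5 := ih (i + 2^s)
      have h0 := ih i
      set m := (2:ℕ)^s with hm
      simp only [show i+4*m+4*m = i+8*m from by ring, show i+4*m+2*m = i+6*m from by ring,
        show i+4*m+m = i+5*m from by ring, show i+2*m+4*m = i+6*m from by ring,
        show i+2*m+2*m = i+4*m from by ring, show i+2*m+m = i+3*m from by ring,
        show i+m+4*m = i+5*m from by ring, show i+m+2*m = i+3*m from by ring,
        show i+m+m = i+2*m from by ring, show i+4*(2*m) = i+8*m from by ring,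
        show i+2*(2*m) = i+4*m from by ring] at h4 h6 h5 h0 ⊢
      linear_combination h4 + X 2 ^ m * h6 + X 3 ^ m * h5 + X 4 ^ m * h0 +
        (X 2 ^ m * X 3 ^ m * g (i+3*m) + X 2 ^ m * X 4 ^ m * g (i+2*m) + X 3 ^ m * X 4 ^ m * g (i+m)) * htwo'
    intro i
    simpa [pow_succ, mul_comm, mul_left_comm] using key i

/-- In `ℤ/2[w₂, w₃, w₄]` (here `X j` denotes `w_j`), let `g i` be defined by `g 0 = 1`,
`g 1 = 0` and `g i = w₂ g_{i-2} + w₃ g_{i-3} + w₄ g_{i-4}` for `i ≥ 2` (with `g_j = 0`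
for `j < 0`).  Then `g (2^t - 3) = 0` for every `t ≥ 2`. -/
theorem g4_pow_two_sub_three_eq_zero
    (g : ℕ → MvPolynomial ℕ (ZMod 2))
    (h0 : g 0 = 1) (h1 : g 1 = 0)
    (h2 : g 2 = X 2 * g 0)
    (h3 : g 3 = X 2 * g 1 + X 3 * g 0)
    (hrec : ∀ i : ℕ, g (i + 4) = X 2 * g (i + 2) + X 3 * g (i + 1) + X 4 * g i) :
    ∀ t : ℕ, 2 ≤ t → g (2 ^ t - 3) = 0 := by
  have F := frob g hrec
  have g2' : g 2 = X 2 := by rw [h2, h0, mul_one]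
  have g3' : g 3 = X 3 := by rw [h3, h1, h0]; ring
  have e4 : g 4 = X 2 * g 2 + X 3 * g 1 + X 4 * g 0 := by simpa using hrec 0
  have e5 : g 5 = X 2 * g 3 + X 3 * g 2 + X 4 * g 1 := by simpa using hrec 1
  have e6 : g 6 = X 2 * g 4 + X 3 * g 3 + X 4 * g 2 := by simpa using hrec 2
  have e7 : g 7 = X 2 * g 5 + X 3 * g 4 + X 4 * g 3 := by simpa using hrec 3
  have e9 : g 9 = X 2 * g 7 + X 3 * g 6 + X 4 * g 5 := by simpa using hrec 5
  have g4' : g 4 = X 2 ^ 2 + X 4 := by rw [e4, g2', h1, h0]; ring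
  have z5 : g 5 = 0 := by rw [e5, g3', g2', h1]; linear_combination X 2 * X 3 * htwo'
  have g6' : g 6 = X 2 ^ 3 + X 3 ^ 2 := by
    rw [e6, g4', g3', g2']; linear_combination X 2 * X 4 * htwo'
  have g7' : g 7 = X 2 ^ 2 * X 3 := by
    rw [e7, z5, g4', g3']; linear_combination X 3 * X 4 * htwo'
  have g9' : g 9 = X 3 ^ 3 := by
    rw [e9, g7', g6', z5]; linear_combination X 2 ^ 3 * X 3 * htwo'
  have z13 : g 13 = 0 := by
    have := F 1 5
    simp only [show (5:ℕ) + 4*2^1 = 13 from by norm_num, show (5:ℕ) + 2*2^1 = 9 from by norm_num,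
      show (5:ℕ) + 2^1 = 7 from by norm_num] at this
    rw [this, g9', g7', z5]; linear_combination X 2 ^ 2 * X 3 ^ 3 * htwo'
  suffices H : ∀ t, ∀ s, s ≤ t → 2 ≤ s → g (2^s - 3) = 0 by
    intro t ht; exact H t t le_rfl ht
  intro t
  induction t with
  | zero => intro s hs h2s; omega
  | succ t ih =>
    intro s hs h2s
    rcases Nat.lt_or_ge s (t+1) with hlt | hge
    · exact ih s (by omega) h2s
    have hst : s = t + 1 := by omega
    subst hst
    rcases Nat.lt_or_ge (t+1) 5 with hsm | hbig
    · have hub : t ≤ 3 := by omega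
      have hlb : 1 ≤ t := by omega
      interval_cases t
      · simpa using h1
      · simpa using z5
      · simpa using z13
    · -- t + 1 ≥ 5, so t ≥ 4
      obtain ⟨u, rfl⟩ : ∃ u, t = u + 4 := ⟨t - 4, by omega⟩
      set m := (2:ℕ)^(u+2) with hm
      have hm4 : 4 ≤ m := by
        calc (4:ℕ) = 2^2 := by norm_num
        _ ≤ 2^(u+2) := Nat.pow_le_pow_right (by norm_num) (by omega)
      have ht1 : 2^(u+4+1) = 8*m := by
        rw [hm, show u+4+1 = (u+2)+3 from by omega, pow_add]; ring
      have ht0 : 2^(u+4) = 4*m := by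
        rw [hm, show u+4 = (u+2)+2 from by omega, pow_add]; ring
      have htm1 : 2^(u+4-1) = 2*m := by
        rw [hm, show u+4-1 = (u+2)+1 from by omega, pow_add]; ring
      have z1 : g (4*m - 3) = 0 := by
        have := ih (u+4) le_rfl (by omega); rwa [ht0] at this
      have z2 : g (2*m - 3) = 0 := by
        have := ih (u+4-1) (by omega) (by omega); rwa [htm1] at this
      have z3 : g (m - 3) = 0 := by
        have := ih (u+2) (by omega) (by omega); rwa [← hm] at this
      have hF4 := F (u+2) (4*m-3)
      have hF2 := F (u+2) (2*m-3)
      have hF1 := F (u+2) (m-3)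
      rw [← hm] at hF4 hF2 hF1
      simp only [show 4*m-3+4*m = 8*m-3 from by omega, show 4*m-3+2*m = 6*m-3 from by omega,
        show 4*m-3+m = 5*m-3 from by omega, show 2*m-3+4*m = 6*m-3 from by omega,
        show 2*m-3+2*m = 4*m-3 from by omega, show 2*m-3+m = 3*m-3 from by omega,
        show m-3+4*m = 5*m-3 from by omega, show m-3+2*m = 3*m-3 from by omega,
        show m-3+m = 2*m-3 from by omega] at hF4 hF2 hF1
      rw [show 2^(u+4+1)-3 = 8*m-3 from by omega]
      linear_combination hF4 + X 2 ^ m * hF2 + X 3 ^ m * hF1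
        + (X 4 ^ m + X 2 ^ m * X 2 ^ m) * z1 + (X 2 ^ m * X 4 ^ m + X 3 ^ m * X 3 ^ m) * z2
        + (X 3 ^ m * X 4 ^ m) * z3 + (X 2 ^ m * X 3 ^ m * g (3*m-3)) * htwo'
end

section
/- Let h_i(w_4, w_5) in Z/2[w_4, w_5] be defined by h_0 = 1, h_1 = h_2 = h_3 = 0, and h_i = w_4 h_{i-4} + w_5 h_{i-5} for i \geq 4 (with h_j = 0 for j < 0). Then for every t \geq 4, h_{2^t - 3}(w_4, w_5) is a nonzero polynomial. -/
open MvPolynomial DualNumber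

/-!
Specialise `w₄ ↦ 1`, `w₅ ↦ ε` in the dual numbers `𝔽₂[ε]`, `ε² = 0`. The recurrence becomes
`a (i + 5) = a (i + 1) + ε a i`, whose solution is `1, k ε, 0, 0` at the indices `4k, …, 4k + 3`:
only terms linear in `w₅` survive, and `k ε` records the coefficient `k mod 2` of `w₄^(k-1) w₅`
in `h (4k + 1)`. Since `2^t - 3 = 4 (2^(t-2) - 1) + 1` with `2^(t-2) - 1` odd, the image of
`h (2^t - 3)` is `ε ≠ 0`.
-/

theorem recurrence_eps_mod_four {A : Type*} [CommSemiring A] {e : A} (he : e * e = 0)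
    {a : ℕ → A} (h0 : a 0 = 1) (h1 : a 1 = 0) (h2 : a 2 = 0) (h3 : a 3 = 0) (h4 : a 4 = 1)
    (hrec : ∀ i, a (i + 5) = a (i + 1) + e * a i) (k : ℕ) :
    a (4 * k) = 1 ∧ a (4 * k + 1) = k * e ∧ a (4 * k + 2) = 0 ∧ a (4 * k + 3) = 0 ∧
      a (4 * k + 4) = 1 := by
  induction k with
  | zero => simpa using ⟨h0, h1, h2, h3, h4⟩
  | succ k ih =>
    obtain ⟨i0, i1, i2, i3, i4⟩ := ih
    have r1 := hrec (4 * k)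
    have r2 := hrec (4 * k + 1)
    have r3 := hrec (4 * k + 2)
    have r4 := hrec (4 * k + 3)
    simp only [show 4 * k + 1 + 1 = 4 * k + 2 from rfl, show 4 * k + 2 + 1 = 4 * k + 3 from rfl,
      show 4 * k + 3 + 1 = 4 * k + 4 from rfl] at r2 r3 r4
    refine ⟨?_, ?_, ?_, ?_, ?_⟩
    · rwa [mul_add_one]
    · rw [mul_add_one, show 4 * k + 4 + 1 = 4 * k + 5 from rfl, r1, i1, i0]
      push_cast
      ring
    · rw [mul_add_one, show 4 * k + 4 + 2 = 4 * k + 1 + 5 from rfl, r2, i2, i1,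
        mul_left_comm, he, mul_zero, add_zero]
    · rw [mul_add_one, show 4 * k + 4 + 3 = 4 * k + 2 + 5 from rfl, r3, i3, i2, mul_zero,
        add_zero]
    · rw [mul_add_one, show 4 * k + 4 + 4 = 4 * k + 3 + 5 from rfl, r4, i4, i3, mul_zero,
        add_zero]

theorem DualNumber.natCast_mul_eps_ne_zero {R : Type*} [Semiring R] {k : ℕ} (hk : (k : R) ≠ 0) :
    (k : R[ε]) * ε ≠ 0 := by
  intro hzero
  apply hk
  simpa using congrArg TrivSqZeroExt.snd hzero

theorem two_pow_sub_three_eq (s : ℕ) : 2 ^ (s + 2) - 3 = 4 * (2 ^ s - 1) + 1 := by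
  have : 1 ≤ 2 ^ s := Nat.one_le_two_pow
  rw [pow_add]
  omega

theorem odd_two_pow_sub_one {s : ℕ} (hs : s ≠ 0) : Odd (2 ^ s - 1) :=
  Nat.Even.sub_odd Nat.one_le_two_pow ((Nat.even_pow' hs).2 even_two) odd_one

/-- In `ℤ/2[w₄, w₅]` (here `X 4`, `X 5` denote `w₄`, `w₅`), let `h i` be defined by
`h 0 = 1`, `h 1 = h 2 = h 3 = 0` and `h i = w₄ h_{i-4} + w₅ h_{i-5}` for `i ≥ 4`
(with `h_j = 0` for `j < 0`).  Then `h (2^t - 3) ≠ 0` for every `t ≥ 4`. -/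
theorem h_pow_two_sub_three_ne_zero
    (h : ℕ → MvPolynomial ℕ (ZMod 2))
    (h0 : h 0 = 1) (h1 : h 1 = 0) (h2 : h 2 = 0) (h3 : h 3 = 0)
    (h4 : h 4 = X 4 * h 0)
    (hrec : ∀ i : ℕ, h (i + 5) = X 4 * h (i + 1) + X 5 * h i) :
    ∀ t : ℕ, 4 ≤ t → h (2 ^ t - 3) ≠ 0 := by
  intro t ht hzero
  obtain ⟨s, rfl⟩ : ∃ s, t = s + 2 := ⟨t - 2, by omega⟩
  let φ := aeval (R := ZMod 2) fun i : ℕ => if i = 5 then (ε : (ZMod 2)[ε]) else 1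
  have hφ4 : φ (X 4) = 1 := by simp [φ]
  have hφ5 : φ (X 5) = ε := by simp [φ]
  have hφ := recurrence_eps_mod_four (a := fun n => φ (h n)) eps_mul_eps
    (by simp [h0]) (by simp [h1]) (by simp [h2]) (by simp [h3]) (by simp [h4, h0, hφ4])
    (fun i => by simp only [hrec i, map_add, map_mul, hφ4, hφ5, one_mul]) (2 ^ s - 1)
  have hodd : ((2 ^ s - 1 : ℕ) : ZMod 2) ≠ 0 :=
    ZMod.natCast_ne_zero_iff_odd.2 (odd_two_pow_sub_one (by omega))
  apply natCast_mul_eps_ne_zero hodd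
  rw [← hφ.2.1, ← two_pow_sub_three_eq, hzero, map_zero]
end

section
/- Let g_i(w_2, w_3, w_4, w_5) in Z/2[w_2,w_3,w_4,w_5] be defined by g_0 = 1, g_1 = 0, and g_i = w_2 g_{i-2} + w_3 g_{i-3} + w_4 g_{i-4} + w_5 g_{i-5} for i \geq 2 (with g_j = 0 for j < 0). Then g_i(w_2,w_3,w_4,w_5) \neq 0 for every i \geq 2. -/
open MvPolynomial

/-- Lemma 2.2(iii): In `ℤ/2[w₂, w₃, w₄, w₅]` (here `X j` denotes `w_j`), let `g i` be
defined by `g 0 = 1`, `g 1 = 0` and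
`g i = w₂ g_{i-2} + w₃ g_{i-3} + w₄ g_{i-4} + w₅ g_{i-5}` for `i ≥ 2` (with `g_j = 0`
for `j < 0`).  Then `g i ≠ 0` for every `i ≥ 2`. -/
theorem g5_ne_zero
    (g : ℕ → MvPolynomial ℕ (ZMod 2))
    (h0 : g 0 = 1) (h1 : g 1 = 0)
    (h2 : g 2 = X 2 * g 0)
    (h3 : g 3 = X 2 * g 1 + X 3 * g 0)
    (h4 : g 4 = X 2 * g 2 + X 3 * g 1 + X 4 * g 0)
    (hrec : ∀ i : ℕ,
      g (i + 5) = X 2 * g (i + 3) + X 3 * g (i + 2) + X 4 * g (i + 1) + X 5 * g i) :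
    ∀ i : ℕ, 2 ≤ i → g i ≠ 0 := by
  classical
  -- A : coefficient of w₂ⁿ in g (2n) is 1
  have hA : ∀ n : ℕ, coeff (Finsupp.single 2 n) (g (2 * n)) = 1 := by
    intro n
    induction n using Nat.strong_induction_on with
    | _ n ih =>
      match n with
      | 0 => simp [h0]
      | 1 => simp [h2, h0, coeff_X']
      | 2 =>
        have : g 4 = X 2 * X 2 + X 4 := by rw [h4, h2, h0, h1]; ring
        rw [show (2 : ℕ) * 2 = 4 from rfl, this]
        rw [coeff_add, coeff_X_mul', coeff_X']
        simp [Finsupp.mem_support_iff, Finsupp.single_apply, ← Finsupp.single_tsub,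
          coeff_X', Finsupp.single_eq_single_iff]
      | (m + 3) =>
        have e : 2 * (m + 3) = (2 * m + 1) + 5 := by ring
        rw [e, hrec (2 * m + 1)]
        have h2s : (2 : ℕ) ∈ (Finsupp.single 2 (m + 3)).support := by
          simp [Finsupp.mem_support_iff]
        have h3s : (3 : ℕ) ∉ (Finsupp.single 2 (m + 3)).support := by
          simp [Finsupp.mem_support_iff, Finsupp.single_apply]
        have h4s : (4 : ℕ) ∉ (Finsupp.single 2 (m + 3)).support := by
          simp [Finsupp.mem_support_iff, Finsupp.single_apply]
        have h5s : (5 : ℕ) ∉ (Finsupp.single 2 (m + 3)).support := by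
          simp [Finsupp.mem_support_iff, Finsupp.single_apply]
        rw [coeff_add, coeff_add, coeff_add, coeff_X_mul', coeff_X_mul', coeff_X_mul',
          coeff_X_mul', if_pos h2s, if_neg h3s, if_neg h4s, if_neg h5s]
        have hsub : Finsupp.single 2 (m + 3) - Finsupp.single 2 1 = Finsupp.single 2 (m + 2) := by
          rw [← Finsupp.single_tsub]; norm_num
        have e2 : 2 * m + 1 + 3 = 2 * (m + 2) := by ring
        rw [hsub, e2, ih (m + 2) (by omega)]
        ring
  -- B : coefficient of w₂ᵏw₃ in g (2k+3) is k+1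
  have hB : ∀ k : ℕ,
      coeff (Finsupp.single 2 k + Finsupp.single 3 1) (g (2 * k + 3)) = (k + 1 : ZMod 2) := by
    intro k
    induction k with
    | zero =>
      have : g 3 = X 3 := by rw [h3, h1, h0]; ring
      simp [this, coeff_X']
    | succ k ih =>
      set m := Finsupp.single 2 (k + 1) + Finsupp.single 3 1 with hm
      have e : 2 * (k + 1) + 3 = 2 * k + 5 := by ring
      rw [e, hrec (2 * k)]
      have h2s : (2 : ℕ) ∈ m.support := by
        simp [hm, Finsupp.mem_support_iff, Finsupp.add_apply, Finsupp.single_apply]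
      have h3s : (3 : ℕ) ∈ m.support := by
        simp [hm, Finsupp.mem_support_iff, Finsupp.add_apply, Finsupp.single_apply]
      have h4s : (4 : ℕ) ∉ m.support := by
        simp [hm, Finsupp.mem_support_iff, Finsupp.add_apply, Finsupp.single_apply]
      have h5s : (5 : ℕ) ∉ m.support := by
        simp [hm, Finsupp.mem_support_iff, Finsupp.add_apply, Finsupp.single_apply]
      rw [coeff_add, coeff_add, coeff_add, coeff_X_mul', coeff_X_mul', coeff_X_mul',
        coeff_X_mul', if_pos h2s, if_pos h3s, if_neg h4s, if_neg h5s]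
      have hsub2 : m - Finsupp.single 2 1 = Finsupp.single 2 k + Finsupp.single 3 1 := by
        ext a
        simp [hm, Finsupp.tsub_apply, Finsupp.add_apply, Finsupp.single_apply]
        split_ifs <;> omega
      have hsub3 : m - Finsupp.single 3 1 = Finsupp.single 2 (k + 1) := by
        ext a
        simp only [hm, Finsupp.tsub_apply, Finsupp.add_apply, Finsupp.single_apply]
        split_ifs <;> omega
      have e2 : 2 * k + 2 = 2 * (k + 1) := by ring
      rw [hsub2, hsub3, e2, ih, hA (k + 1)]
      push_cast
      ring
  -- C : coefficient of w₂ᵏw₅ in g (2k+5) is k+1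
  have hC : ∀ k : ℕ,
      coeff (Finsupp.single 2 k + Finsupp.single 5 1) (g (2 * k + 5)) = (k + 1 : ZMod 2) := by
    intro k
    induction k with
    | zero =>
      rw [show 2 * 0 + 5 = 0 + 5 from rfl, hrec 0]
      set m : ℕ →₀ ℕ := Finsupp.single 2 0 + Finsupp.single 5 1 with hm
      have hm' : m = Finsupp.single 5 1 := by simp [hm]
      have h2s : (2 : ℕ) ∉ m.support := by
        simp [hm', Finsupp.mem_support_iff, Finsupp.single_apply]
      have h3s : (3 : ℕ) ∉ m.support := by
        simp [hm', Finsupp.mem_support_iff, Finsupp.single_apply]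
      have h4s : (4 : ℕ) ∉ m.support := by
        simp [hm', Finsupp.mem_support_iff, Finsupp.single_apply]
      have h5s : (5 : ℕ) ∈ m.support := by
        simp [hm', Finsupp.mem_support_iff]
      rw [coeff_add, coeff_add, coeff_add, coeff_X_mul', coeff_X_mul', coeff_X_mul',
        coeff_X_mul', if_neg h2s, if_neg h3s, if_neg h4s, if_pos h5s]
      have hsub : m - Finsupp.single 5 1 = 0 := by
        rw [hm', ← Finsupp.single_tsub]; norm_num
      rw [hsub, h0]
      simp [coeff_one]
    | succ k ih =>
      set m := Finsupp.single 2 (k + 1) + Finsupp.single 5 1 with hm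
      have e : 2 * (k + 1) + 5 = (2 * k + 2) + 5 := by ring
      rw [e, hrec (2 * k + 2)]
      have h2s : (2 : ℕ) ∈ m.support := by
        simp [hm, Finsupp.mem_support_iff, Finsupp.add_apply, Finsupp.single_apply]
      have h3s : (3 : ℕ) ∉ m.support := by
        simp [hm, Finsupp.mem_support_iff, Finsupp.add_apply, Finsupp.single_apply]
      have h4s : (4 : ℕ) ∉ m.support := by
        simp [hm, Finsupp.mem_support_iff, Finsupp.add_apply, Finsupp.single_apply]
      have h5s : (5 : ℕ) ∈ m.support := by
        simp [hm, Finsupp.mem_support_iff, Finsupp.add_apply, Finsupp.single_apply]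
      rw [coeff_add, coeff_add, coeff_add, coeff_X_mul', coeff_X_mul', coeff_X_mul',
        coeff_X_mul', if_pos h2s, if_neg h3s, if_neg h4s, if_pos h5s]
      have hsub2 : m - Finsupp.single 2 1 = Finsupp.single 2 k + Finsupp.single 5 1 := by
        ext a
        simp [hm, Finsupp.tsub_apply, Finsupp.add_apply, Finsupp.single_apply]
        split_ifs <;> omega
      have hsub5 : m - Finsupp.single 5 1 = Finsupp.single 2 (k + 1) := by
        ext a
        simp only [hm, Finsupp.tsub_apply, Finsupp.add_apply, Finsupp.single_apply]
        split_ifs <;> omega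
      have e2 : 2 * k + 2 + 3 = 2 * k + 5 := by ring
      have e3 : 2 * k + 2 + 2 = 2 * (k + 2) := by ring
      have e4 : 2 * k + 2 = 2 * (k + 1) := by ring
      rw [hsub2, hsub5, e2, ih, e4, hA (k + 1)]
      push_cast
      ring
  -- conclusion
  intro i hi hzero
  rcases Nat.even_or_odd i with he | ho
  · obtain ⟨n, rfl⟩ := he
    have h := hA n
    rw [show 2 * n = n + n from by ring, hzero, coeff_zero] at h
    exact one_ne_zero h.symm
  · obtain ⟨k', hk'⟩ := ho
    have hk3 : 1 ≤ k' := by omega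
    obtain ⟨k, rfl⟩ : ∃ k, k' = k + 1 := ⟨k' - 1, by omega⟩
    rcases Nat.even_or_odd k with hek | hok
    · -- k even : use B
      obtain ⟨t, rfl⟩ := hek
      have h := hB (t + t)
      rw [show 2 * (t + t) + 3 = i from by omega, hzero, coeff_zero] at h
      have : ((t : ZMod 2) + t + 1) = 0 := by push_cast at h; linear_combination -h
      rw [← two_mul, show (2 : ZMod 2) = 0 from rfl, zero_mul, zero_add] at this
      exact one_ne_zero this
    · -- k odd : use C
      obtain ⟨t, rfl⟩ := hok
      have h := hC (2 * t)
      rw [show 2 * (2 * t) + 5 = i from by omega, hzero, coeff_zero] at h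
      have : ((t : ZMod 2) + t + 1) = 0 := by push_cast at h; linear_combination -h
      rw [← two_mul, show (2 : ZMod 2) = 0 from rfl, zero_mul, zero_add] at this
      exact one_ne_zero this
end

section
/- In Z/2[w_1, w_2, w_3], with \bar{w}_i the degree-i homogeneous component of (1 + w_1 + w_2 + w_3)^{-1}, for every t \geq 3 and every choice of a, b in Z/2 there is no identity \bar{w}_{2^t} = (a·w_1^2 + w_2)·\bar{w}_{2^t - 2} + b·w_1·\bar{w}_{2^t - 1} in Z/2[w_1,w_2,w_3]. -/
open MvPolynomial

/-- Evaluation sending `w₁ ↦ X`, `w₂ ↦ 0`, `w₃ ↦ 1`. -/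
noncomputable def wbarEvalFun : ℕ → Polynomial (ZMod 2) :=
  fun n => if n = 1 then Polynomial.X else if n = 3 then 1 else 0

/-- In `ℤ/2[w₁, w₂, w₃]` (here `X j` denotes `w_j`), with `w̄ i` the degree-`i`
homogeneous component of `(1 + w₁ + w₂ + w₃)⁻¹` (so `w̄ 0 = 1` and
`w̄ i = w₁ w̄_{i-1} + w₂ w̄_{i-2} + w₃ w̄_{i-3}` for `i ≥ 1`, with `w̄_j = 0` for
`j < 0`), for every `t ≥ 3` and all `a b : ℤ/2` one never has
`w̄ (2^t) = (a w₁² + w₂) w̄ (2^t - 2) + b w₁ w̄ (2^t - 1)`. -/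
theorem wbar_pow_two_no_relation
    (wb : ℕ → MvPolynomial ℕ (ZMod 2))
    (h0 : wb 0 = 1)
    (h1 : wb 1 = X 1 * wb 0)
    (h2 : wb 2 = X 1 * wb 1 + X 2 * wb 0)
    (hrec : ∀ i : ℕ, wb (i + 3) = X 1 * wb (i + 2) + X 2 * wb (i + 1) + X 3 * wb i) :
    ∀ t : ℕ, 3 ≤ t → ∀ a b : ZMod 2,
      wb (2 ^ t) ≠
        (C a * X 1 ^ 2 + X 2) * wb (2 ^ t - 2) + C b * X 1 * wb (2 ^ t - 1) := by
  intro t ht a b h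
  set f := wbarEvalFun with hf
  set u : ℕ → Polynomial (ZMod 2) := fun n => aeval f (wb n) with hu
  -- transported initial conditions and recurrence
  have hu0 : u 0 = 1 := by simp [hu, h0]
  have hu1 : u 1 = Polynomial.X := by
    simp [hu, h1, h0, hf, wbarEvalFun]
  have hu2 : u 2 = Polynomial.X ^ 2 := by
    have h' := congrArg (aeval f) h2
    simp only [map_add, map_mul, aeval_X] at h'
    have h'' : u 2 = f 1 * u 1 + f 2 * u 0 := h'
    rw [hu1, hu0] at h''
    simp only [hf, wbarEvalFun] at h''
    rw [h'']
    norm_num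
    ring
  have hurec : ∀ i : ℕ, u (i + 3) = Polynomial.X * u (i + 2) + u i := by
    intro i
    have h' := congrArg (aeval f) (hrec i)
    simp only [map_add, map_mul, aeval_X] at h'
    have h'' : u (i + 3) = f 1 * u (i + 2) + f 2 * u (i + 1) + f 3 * u i := h'
    simp only [hf, wbarEvalFun] at h''
    rw [h'']
    norm_num
  -- each `u n` is monic of degree `n`
  have key : ∀ n : ℕ, (u n).Monic ∧ (u n).degree = n := by
    intro n
    induction n using Nat.strong_induction_on with
    | _ n ih =>
      match n with
      | 0 => exact ⟨by rw [hu0]; exact Polynomial.monic_one, by rw [hu0]; simp⟩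
      | 1 => exact ⟨by rw [hu1]; exact Polynomial.monic_X, by rw [hu1]; simp⟩
      | 2 =>
        refine ⟨by rw [hu2]; exact Polynomial.monic_X_pow 2, by rw [hu2]; simp⟩
      | (k + 3) =>
        obtain ⟨m2, d2⟩ := ih (k + 2) (by omega)
        obtain ⟨m0, d0⟩ := ih k (by omega)
        have hmul : (Polynomial.X * u (k + 2)).Monic := Polynomial.monic_X.mul m2
        have dmul : (Polynomial.X * u (k + 2)).degree = ((k + 3 : ℕ) : WithBot ℕ) := by
          rw [Polynomial.degree_mul, Polynomial.degree_X, d2]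
          norm_cast
          omega
        have hlt : (u k).degree < (Polynomial.X * u (k + 2)).degree := by
          rw [dmul, d0]
          exact_mod_cast Nat.lt_succ_of_lt (by omega)
        constructor
        · rw [hurec k]
          exact hmul.add_of_left hlt
        · rw [hurec k, Polynomial.degree_add_eq_left_of_degree_lt hlt, dmul]
  have kne : ∀ n : ℕ, u n ≠ 0 := fun n => (key n).1.ne_zero
  have knat : ∀ n : ℕ, (u n).natDegree = n := fun n =>
    Polynomial.natDegree_eq_of_degree_eq_some (key n).2
  -- rewrite 2^t = m + 8
  obtain ⟨m, hm⟩ : ∃ m, 2 ^ t = m + 8 := by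
    refine ⟨2 ^ t - 8, ?_⟩
    have h8 : (8 : ℕ) ≤ 2 ^ t := by
      calc (8 : ℕ) = 2 ^ 3 := by norm_num
        _ ≤ 2 ^ t := Nat.pow_le_pow_right (by norm_num) ht
    omega
  rw [hm] at h
  have e2 : m + 8 - 2 = m + 6 := by omega
  have e1 : m + 8 - 1 = m + 7 := by omega
  rw [e2, e1] at h
  -- transport the putative relation
  have h' := congrArg (aeval f) h
  simp only [map_add, map_mul, map_pow, aeval_X, aeval_C, Polynomial.algebraMap_eq] at h'
  rw [show f 1 = Polynomial.X from rfl, show f 2 = 0 from rfl] at h'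
  change u (m + 8) =
      (Polynomial.C a * Polynomial.X ^ 2 + 0) * u (m + 6)
        + Polynomial.C b * Polynomial.X * u (m + 7) at h'
  have R8 := hurec (m + 5)
  have R7 := hurec (m + 4)
  have R5 := hurec (m + 2)
  have hab : ∀ x : ZMod 2, x = 0 ∨ x = 1 := by decide
  rcases hab a with rfl | rfl <;> rcases hab b with rfl | rfl <;>
    simp only [map_zero, map_one, zero_mul, one_mul, zero_add, add_zero, mul_zero] at h'
  · -- a = 0, b = 0 : u (m+8) = 0
    exact kne (m + 8) h'
  · -- a = 0, b = 1 : u (m+5) = 0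
    refine kne (m + 5) ?_
    linear_combination h' - R8
  · -- a = 1, b = 0 : u (m+2) = 0
    refine kne (m + 2) ?_
    have htwo : (2 : Polynomial (ZMod 2)) = 0 := by
      have hc : (2 : Polynomial (ZMod 2)) = Polynomial.C 2 := by
        have : ((2:ℕ) : Polynomial (ZMod 2)) = Polynomial.C ((2:ℕ) : ZMod 2) :=
          (Polynomial.C_eq_natCast _).symm
        norm_num at this
        exact this
      rw [hc, show (2 : ZMod 2) = 0 by decide, Polynomial.C_0]
    linear_combination h' - R8 - Polynomial.X * R7 - R5 - (Polynomial.X * u (m + 4)) * htwo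
  · -- a = 1, b = 1 : degree contradiction
    have heq : Polynomial.X ^ 2 * u (m + 6) = u (m + 5) := by
      linear_combination R8 - h'
    have hdeg := congrArg Polynomial.natDegree heq
    rw [(Polynomial.monic_X_pow 2).natDegree_mul (key (m + 6)).1, knat (m + 5),
      Polynomial.natDegree_X_pow, knat (m + 6)] at hdeg
    omega
end

section
/- Let k \geq 3 and suppose p is a homogeneous polynomial in Z/2[w_1,...,w_k] of degree n-k+1 (deg w_j = j) such that w_1 · p = a·w_1·\bar{w}_{n-k+1} + b·\bar{w}_{n-k+2} for some a, b in Z/2. If the reduction of \bar{w}_{n-k+2} modulo w_1 is nonzero, then b = 0 and p = a·\bar{w}_{n-k+1}. -/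
open MvPolynomial

/-- Let `k ≥ 3`, `k ≤ n - k`, and work in `ℤ/2[w₁, …, w_k]` (here `X j` denotes `w_j`,
of degree `j`).  Let `w̄ i` be the degree-`i` homogeneous component of
`(1 + w₁ + ⋯ + w_k)⁻¹`, i.e. `w̄ 0 = 1` and `w̄ i = w₁ w̄_{i-1} + ⋯ + w_k w̄_{i-k}`
for `i ≥ 1`.  Suppose `p` is homogeneous of degree `n - k + 1` (with weights
`deg w_j = j`) and `w₁ p = a w₁ w̄_{n-k+1} + b w̄_{n-k+2}` for some `a b : ℤ/2`.
If the reduction of `w̄_{n-k+2}` modulo `w₁` is nonzero, then `b = 0` and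
`p = a w̄_{n-k+1}`. -/
theorem kernel_step (n k : ℕ) (hk : 3 ≤ k) (hkn : k ≤ n - k)
    (wb : ℕ → MvPolynomial ℕ (ZMod 2))
    (h0 : wb 0 = 1)
    (hrec : ∀ i : ℕ, 1 ≤ i →
      wb i = ∑ j ∈ Finset.Icc 1 k, if j ≤ i then X j * wb (i - j) else 0)
    (p : MvPolynomial ℕ (ZMod 2))
    (hp : p.IsWeightedHomogeneous (id : ℕ → ℕ) (n - k + 1))
    (a b : ZMod 2)
    (heq : X 1 * p = C a * (X 1 * wb (n - k + 1)) + C b * wb (n - k + 2))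
    (hred : aeval
        (fun j : ℕ => if j = 1 then 0 else (X j : MvPolynomial ℕ (ZMod 2)))
        (wb (n - k + 2)) ≠ 0) :
    b = 0 ∧ p = C a * wb (n - k + 1) := by
  have happ := congrArg
    (aeval (R := ZMod 2) (fun j : ℕ => if j = 1 then 0 else (X j : MvPolynomial ℕ (ZMod 2))))
    heq
  simp only [map_add, map_mul, aeval_X, aeval_C, reduceIte, zero_mul, mul_zero, zero_add] at happ
  have hb : b = 0 := by
    rcases mul_eq_zero.mp happ.symm with h | h
    · exact_mod_cast (C_eq_zero (a := b)).mp h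
    · exact absurd h hred
  subst hb
  simp only [map_zero, zero_mul, add_zero] at heq
  refine ⟨rfl, ?_⟩
  have hX : (X 1 : MvPolynomial ℕ (ZMod 2)) ≠ 0 := X_ne_zero 1
  have : X 1 * p = X 1 * (C a * wb (n - k + 1)) := by ring_nf; ring_nf at heq; linear_combination heq
  exact mul_left_cancel₀ hX this
end

section
/- Let g_i(w_2,w_3) in Z/2[w_2,w_3] be defined by g_0 = 1, g_1 = 0, g_i = w_2 g_{i-2} + w_3 g_{i-3} for i \geq 2. Then for every integer \lambda \geq 2, the polynomial g_{5·2^\lambda}(w_2,w_3) contains the monomial w_2^{5·2^{\lambda-1}} with coefficient 1; in particular g_{5·2^\lambda} \neq 0. -/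
open MvPolynomial

/-- Case (b) in the proof of Lemma 2.2(i): In `ℤ/2[w₂, w₃]` (here `X 2`, `X 3` denote
`w₂`, `w₃`), with `g 0 = 1`, `g 1 = 0` and `g i = w₂ g_{i-2} + w₃ g_{i-3}` for `i ≥ 2`,
for every `λ ≥ 2` the polynomial `g (5·2^λ)` contains the monomial `w₂^(5·2^(λ-1))`
with coefficient `1`; in particular `g (5·2^λ) ≠ 0`. -/
theorem g_five_pow_two_contains_monomial
    (g : ℕ → MvPolynomial ℕ (ZMod 2))
    (h0 : g 0 = 1) (h1 : g 1 = 0)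
    (h2 : g 2 = X 2 * g 0)
    (hrec : ∀ i : ℕ, g (i + 3) = X 2 * g (i + 1) + X 3 * g i) :
    ∀ l : ℕ, 2 ≤ l →
      coeff (Finsupp.single 2 (5 * 2 ^ (l - 1))) (g (5 * 2 ^ l)) = 1 ∧
      g (5 * 2 ^ l) ≠ 0 := by
  have aux : ∀ m : ℕ, coeff (Finsupp.single 2 (m + 1)) (g (2 * (m + 1))) = 1 := by
    intro m
    induction m with
    | zero =>
      rw [show 2 * 1 = 2 from rfl, h2, h0, mul_one]
      simp [coeff_single_X]
    | succ n ih =>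
      have e : 2 * (n + 2) = (2 * n + 1) + 3 := by ring
      rw [e, hrec, coeff_add]
      have e2 : Finsupp.single 2 (n + 2) = Finsupp.single 2 1 + Finsupp.single 2 (n + 1) := by
        rw [← Finsupp.single_add]; ring_nf
      have c1 : coeff (Finsupp.single 2 (n + 2)) (X 2 * g (2 * n + 1 + 1)) = 1 := by
        rw [e2, coeff_X_mul, show 2 * n + 1 + 1 = 2 * (n + 1) by ring, ih]
      have c2 : coeff (Finsupp.single 2 (n + 2)) (X 3 * g (2 * n + 1)) = 0 := by
        rw [coeff_X_mul']
        simp [Finsupp.single_apply]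
      rw [c1, c2, add_zero]
  intro l hl
  obtain ⟨k, rfl⟩ : ∃ k, l = k + 1 := ⟨l - 1, by omega⟩
  have e : 5 * 2 ^ (k + 1) = 2 * (5 * 2 ^ k) := by ring
  have hk : 1 ≤ 5 * 2 ^ k := Nat.one_le_iff_ne_zero.mpr (by positivity)
  obtain ⟨m, hm⟩ : ∃ m, 5 * 2 ^ k = m + 1 := ⟨5 * 2 ^ k - 1, by omega⟩
  have key : coeff (Finsupp.single 2 (5 * 2 ^ (k + 1 - 1))) (g (5 * 2 ^ (k + 1))) = 1 := by
    rw [show k + 1 - 1 = k from rfl, e, hm, aux]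
  refine ⟨key, fun h => ?_⟩
  rw [h, coeff_zero] at key
  exact one_ne_zero key.symm
end

section
/- Let g_i(w_2,w_3) in Z/2[w_2,w_3] satisfy g_0 = 1, g_1 = 0, g_i = w_2 g_{i-2} + w_3 g_{i-3} for i \geq 2. For every \lambda \geq 2 and every i with 5·2^\lambda + 1 \leq i \leq 6·2^\lambda, one has the identity g_i = (w_2^{2^{\lambda+1}} + w_2^{2^{\lambda-1}} w_3^{2^\lambda}) g_{i-4·2^\lambda} + w_2^{2^\lambda} w_3^{2^\lambda} g_{i-5·2^\lambda} + w_3^{3·2^{\lambda-1}} g_{i-9·2^{\lambda-1}}. -/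
open MvPolynomial

/-- Frobenius-iterated recurrence: `g (j + 3·2^s) = w₂^(2^s) g (j + 2^s) + w₃^(2^s) g j`. -/
theorem g_frob_aux
    (g : ℕ → MvPolynomial ℕ (ZMod 2))
    (hrec : ∀ i : ℕ, g (i + 3) = X 2 * g (i + 1) + X 3 * g i) :
    ∀ s j : ℕ, g (j + 3 * 2 ^ s) = X 2 ^ 2 ^ s * g (j + 2 ^ s) + X 3 ^ 2 ^ s * g j := by
  intro s
  induction s with
  | zero => intro j; simpa using hrec j
  | succ s ih =>
    intro j
    have e1 : j + 3 * 2 ^ (s + 1) = (j + 3 * 2 ^ s) + 3 * 2 ^ s := by ring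
    have e2 : j + 3 * 2 ^ s + 2 ^ s = (j + 2 ^ s) + 3 * 2 ^ s := by ring
    have e3 : j + 2 ^ (s + 1) = j + 2 ^ s + 2 ^ s := by ring
    rw [e1, ih, e2, ih, ih, e3, pow_succ 2 s, pow_mul, pow_mul]
    linear_combination (X 2 ^ 2 ^ s * X 3 ^ 2 ^ s * g (j + 2 ^ s)) *
      (CharTwo.two_eq_zero (R := MvPolynomial ℕ (ZMod 2)))

/-- In `ℤ/2[w₂, w₃]` (here `X 2`, `X 3` denote `w₂`, `w₃`), with `g 0 = 1`, `g 1 = 0`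
and `g i = w₂ g_{i-2} + w₃ g_{i-3}` for `i ≥ 2`, for every `λ ≥ 2` and every `i` with
`5·2^λ + 1 ≤ i ≤ 6·2^λ` one has
`g i = (w₂^(2^(λ+1)) + w₂^(2^(λ-1)) w₃^(2^λ)) g_{i-4·2^λ}
       + w₂^(2^λ) w₃^(2^λ) g_{i-5·2^λ} + w₃^(3·2^(λ-1)) g_{i-9·2^(λ-1)}`. -/
theorem g_frobenius_identity
    (g : ℕ → MvPolynomial ℕ (ZMod 2))
    (h0 : g 0 = 1) (h1 : g 1 = 0)
    (h2 : g 2 = X 2 * g 0)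
    (hrec : ∀ i : ℕ, g (i + 3) = X 2 * g (i + 1) + X 3 * g i) :
    ∀ l : ℕ, 2 ≤ l → ∀ i : ℕ, 5 * 2 ^ l + 1 ≤ i → i ≤ 6 * 2 ^ l →
      g i = (X 2 ^ 2 ^ (l + 1) + X 2 ^ 2 ^ (l - 1) * X 3 ^ 2 ^ l) * g (i - 4 * 2 ^ l)
          + X 2 ^ 2 ^ l * X 3 ^ 2 ^ l * g (i - 5 * 2 ^ l)
          + X 3 ^ (3 * 2 ^ (l - 1)) * g (i - 9 * 2 ^ (l - 1)) := by
  have frob := g_frob_aux g hrec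
  intro l hl i hi _
  obtain ⟨m, rfl⟩ : ∃ m, l = m + 1 := ⟨l - 1, (Nat.succ_pred_eq_of_pos (by omega)).symm⟩
  obtain ⟨k, rfl⟩ : ∃ k, i = 5 * 2 ^ (m + 1) + 1 + k := ⟨i - (5 * 2 ^ (m + 1) + 1), by omega⟩
  have hm : m + 1 - 1 = m := rfl
  rw [hm]
  have i4 : 5 * 2 ^ (m + 1) + 1 + k - 4 * 2 ^ (m + 1) = (1 + k) + 2 ^ (m + 1) := by omega
  have i5 : 5 * 2 ^ (m + 1) + 1 + k - 5 * 2 ^ (m + 1) = 1 + k := by omega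
  have i9 : 5 * 2 ^ (m + 1) + 1 + k - 9 * 2 ^ m = (1 + k) + 2 ^ m := by
    have : 2 ^ (m + 1) = 2 * 2 ^ m := by ring
    omega
  have itop : 5 * 2 ^ (m + 1) + 1 + k = ((1 + k) + 2 ^ (m + 2)) + 3 * 2 ^ (m + 1) := by ring
  rw [i4, i5, i9, itop, frob]
  have e1 : (1 + k) + 2 ^ (m + 2) + 2 ^ (m + 1) = (1 + k) + 3 * 2 ^ (m + 1) := by ring
  rw [e1, frob]
  have e2 : (1 + k) + 2 ^ (m + 2) = ((1 + k) + 2 ^ m) + 3 * 2 ^ m := by ring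
  rw [e2, frob]
  have e3 : (1 + k) + 2 ^ m + 2 ^ m = (1 + k) + 2 ^ (m + 1) := by omega
  rw [e3]
  rw [show 2 ^ (m + 1 + 1) = 2 ^ (m + 1) * 2 from pow_succ 2 (m + 1),
    show 3 * 2 ^ m = 2 ^ (m + 1) + 2 ^ m from by ring,
    pow_mul, pow_add]
  ring
end
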